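/- The sequence of B-modules 0 → B —φ_B→ B² —ψ_B→ (J/J²) ⊗_A B → 0 is exact, where φ_B(c) = (wc, −zc) and ψ_B(a,b) = (class of ax + by in J/J²) ⊗ 1; i.e., the exact sequence 0 → A → A² → J/J² → 0 (with maps c ↦ (wc,−zc) and (a,b) ↦ class of ax+by) remains exact after tensoring with B over A. -/

import Mathlib

/-!
Setting: `R := ℂ[x,y,z,w]/(xw − yz)`, `J = (x,y) ⊆ R`, `A := R/J ≅ ℂ[z,w]`;
`f ∈ ℂ[z,w] ≅ A` a nonzero element with `f(0,0) = 0` (i.e. `f ∈ (z,w)`), and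
`B := A/(f)` the coordinate ring of the curve `C = {f = 0} ⊂ X` through the node.

STATEMENT 6: the sequence of `B`-modules `0 → B —φ_B→ B² —ψ_B→ (J/J²) ⊗_A B → 0` is exact,
where `φ_B(c) = (wc, −zc)` and `ψ_B(a,b) = (class of ax + by in J/J²) ⊗ 1`; i.e. the exact
sequence `0 → A → A² → J/J² → 0` remains exact after tensoring with `B` over `A`.
(The base change `(J/J²) ⊗_A B` is realized as `B ⊗[A] J/J²`, and
`(class of ax+by) ⊗ 1 = a ⊗ x̄ + b ⊗ ȳ` for `a, b ∈ B`.)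
-/

open MvPolynomial TensorProduct

set_option synthInstance.maxHeartbeats 1000000
set_option maxHeartbeats 1000000

noncomputable section

abbrev Pring : Type := MvPolynomial (Fin 4) ℂ

abbrev Rring : Type := Pring ⧸ Ideal.span {(X 0 * X 3 - X 1 * X 2 : Pring)}

def xR : Rring := Ideal.Quotient.mk _ (X 0)
def yR : Rring := Ideal.Quotient.mk _ (X 1)
def zR : Rring := Ideal.Quotient.mk _ (X 2)
def wR : Rring := Ideal.Quotient.mk _ (X 3)

def Jid : Ideal Rring := Ideal.span {xR, yR}

abbrev Aring : Type := Rring ⧸ Jid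

def zA : Aring := Ideal.Quotient.mk _ zR
def wA : Aring := Ideal.Quotient.mk _ wR

def xbar : Jid.Cotangent := Jid.toCotangent ⟨xR, Ideal.subset_span (Set.mem_insert _ _)⟩

def ybar : Jid.Cotangent := Jid.toCotangent ⟨yR, Ideal.subset_span (Set.mem_insert_of_mem _ rfl)⟩

instance Aring_isTwoSided (I : Ideal Aring) : I.IsTwoSided :=
  ⟨fun b ha => by have h := I.mul_mem_left b ha; rwa [mul_comm b _] at h⟩

/-- `B = A/(f)`, the coordinate ring of the curve `C`. -/
abbrev Bring (f : Aring) : Type := Aring ⧸ Ideal.span {f}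

def zB (f : Aring) : Bring f := Ideal.Quotient.mk _ zA
def wB (f : Aring) : Bring f := Ideal.Quotient.mk _ wA

/-! The conormal sequence `0 → A → A² → J/J² → 0` is exact: if `a x + b y ∈ J²`, then after
subtracting an element of `J²` (itself of the form `u x + v y` with `u, v ∈ J`) one gets a
syzygy of `x, y` in `R`. Lifted to `ℂ[x,y,z,w]` it differs by a multiple of the defining
relation `w x - z y` from a syzygy of the coprime variables `x, y`, i.e. from a multiple of
`(y, -x)`. So `(a, b)` is a multiple of `(w, -z)` modulo `J`. Right exactness of `B ⊗_A -`
then gives exactness at `B²` and at `B ⊗_A J/J²`. Injectivity of `φ_B` holds because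
`A ≅ ℂ[z,w]` is a UFD in which `z` and `w` are coprime, so `f ∣ z c` and `f ∣ w c` imply
`f ∣ c`. -/

theorem dvd_of_dvd_mul_of_dvd_mul_of_isRelPrime {α : Type*} [CommMonoidWithZero α]
    [IsCancelMulZero α] [DecompositionMonoid α] {p q g c : α} (hpq : IsRelPrime p q)
    (hp : g ∣ p * c) (hq : g ∣ q * c) : g ∣ c := by
  obtain ⟨g₁, g₂, hg₁, ⟨c, rfl⟩, rfl⟩ := exists_dvd_and_dvd_of_dvd_mul hp
  rcases eq_or_ne g₂ 0 with rfl | hg₂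
  · simp
  have hq' : g₁ ∣ q * c := by
    rw [mul_left_comm, mul_comm g₁] at hq
    exact (mul_dvd_mul_iff_left hg₂).1 hq
  rw [mul_comm g₁]
  exact mul_dvd_mul_left g₂ ((hpq.of_dvd_left hg₁).dvd_of_dvd_mul_left hq')

theorem IsRelPrime.exists_eq_of_mul_add_mul_eq_zero {α : Type*} [CommRing α] [IsDomain α]
    [DecompositionMonoid α] {x y r s : α} (hxy : IsRelPrime x y) (hy : y ≠ 0)
    (h : r * x + s * y = 0) : ∃ p, r = p * y ∧ s = -(p * x) := by
  obtain ⟨p, rfl⟩ :=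
    hxy.symm.dvd_of_dvd_mul_right (⟨-s, by linear_combination h⟩ : y ∣ r * x)
  have hs : y * (p * x + s) = 0 := by linear_combination h
  exact ⟨p, mul_comm _ _, by linear_combination (mul_eq_zero.1 hs).resolve_left hy⟩

theorem MvPolynomial.isRelPrime_X_X {σ R : Type*} [CommRing R] [IsDomain R] {i j : σ}
    (hij : i ≠ j) : IsRelPrime (X i : MvPolynomial σ R) (X j) :=
  X_prime.irreducible.isRelPrime_iff_not_dvd.2 (X_dvd_X.not.2 hij)

theorem Ideal.exists_eq_mul_add_mul_of_mem_span_pair_sq {R : Type*} [CommSemiring R]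
    {a b m : R} (hm : m ∈ Ideal.span {a, b} ^ 2) :
    ∃ u ∈ Ideal.span {a, b}, ∃ v ∈ Ideal.span {a, b}, m = u * a + v * b := by
  rw [pow_two] at hm
  refine Submodule.mul_induction_on hm (fun p hp q hq => ?_) ?_
  · obtain ⟨r, s, rfl⟩ := Ideal.mem_span_pair.1 hp
    exact ⟨r * q, Ideal.mul_mem_left _ _ hq, s * q, Ideal.mul_mem_left _ _ hq, by ring⟩
  · rintro _ _ ⟨u₁, hu₁, v₁, hv₁, rfl⟩ ⟨u₂, hu₂, v₂, hv₂, rfl⟩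
    exact ⟨u₁ + u₂, add_mem hu₁ hu₂, v₁ + v₂, add_mem hv₁ hv₂, by ring⟩

section TensorPair

open LinearMap

variable {R N M : Type*} [CommRing R] [AddCommGroup N] [Module R N] [AddCommGroup M]
  [Module R M] {u v : R} {m₁ m₂ : M}

theorem Function.Exact.lTensor_pair
    (hex : Function.Exact (toSpanSingleton R (R × R) (u, v))
      ((toSpanSingleton R M m₁).coprod (toSpanSingleton R M m₂)))
    (hsurj : Function.Surjective ((toSpanSingleton R M m₁).coprod (toSpanSingleton R M m₂))) :
    Function.Exact (fun c : N => (u • c, v • c))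
        (fun p : N × N => p.1 ⊗ₜ[R] m₁ + p.2 ⊗ₜ[R] m₂) ∧
      Function.Surjective (fun p : N × N => p.1 ⊗ₜ[R] m₁ + p.2 ⊗ₜ[R] m₂) := by
  let e₂ : N ⊗[R] (R × R) ≃ₗ[R] N × N :=
    (prodRight R R N R R).trans ((TensorProduct.rid R N).prodCongr (TensorProduct.rid R N))
  let φ : N →ₗ[R] N × N := (lsmul R N u).prod (lsmul R N v)
  let ψ : N × N →ₗ[R] N ⊗[R] M :=
    ((TensorProduct.mk R N M).flip m₁).coprod ((TensorProduct.mk R N M).flip m₂)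
  have h₁₂ : φ ∘ₗ (TensorProduct.rid R N).toLinearMap =
      e₂.toLinearMap ∘ₗ lTensor N (toSpanSingleton R (R × R) (u, v)) := by
    refine TensorProduct.ext' fun n r => ?_
    simp [φ, e₂, smul_smul, mul_comm]
  have h₂₃ : ψ ∘ₗ e₂.toLinearMap = (LinearEquiv.refl R _).toLinearMap ∘ₗ
      lTensor N ((toSpanSingleton R M m₁).coprod (toSpanSingleton R M m₂)) := by
    refine TensorProduct.ext' fun n ⟨a, b⟩ => ?_
    simp [ψ, e₂, tmul_add, tmul_smul, smul_tmul']
  refine ⟨(Function.Exact.iff_of_ladder_linearEquiv h₁₂ h₂₃).2 (lTensor_exact N hex hsurj),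
    fun t => ?_⟩
  obtain ⟨s, rfl⟩ := lTensor_surjective N hsurj t
  exact ⟨e₂ s, LinearMap.congr_fun h₂₃ s⟩

end TensorPair

theorem xR_mul_wR : xR * wR = yR * zR := by
  simp only [xR, yR, zR, wR, ← map_mul]
  exact Ideal.Quotient.eq.2 (Ideal.mem_span_singleton_self _)

theorem exists_eq_of_mul_xR_add_mul_yR_eq_zero {r s : Rring} (h : r * xR + s * yR = 0) :
    ∃ t p : Rring, r = t * wR + p * yR ∧ s = -(t * zR) - p * xR := by
  obtain ⟨r, rfl⟩ := Ideal.Quotient.mk_surjective r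
  obtain ⟨s, rfl⟩ := Ideal.Quotient.mk_surjective s
  simp only [xR, yR, ← map_mul, ← map_add, Ideal.Quotient.eq_zero_iff_mem,
    Ideal.mem_span_singleton'] at h
  obtain ⟨t, ht⟩ := h
  obtain ⟨p, hr, hs⟩ :=
    (isRelPrime_X_X (by decide : (0 : Fin 4) ≠ 1)).exists_eq_of_mul_add_mul_eq_zero (X_ne_zero 1)
      (show (r - t * X 3) * X 0 + (s + t * X 2) * X 1 = 0 by linear_combination -ht)
  refine ⟨Ideal.Quotient.mk _ t, Ideal.Quotient.mk _ p, ?_, ?_⟩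
  · rw [show r = t * X 3 + p * X 1 by linear_combination hr]
    simp [wR, yR]
  · rw [show s = -(t * X 2) - p * X 0 by linear_combination hs]
    simp [zR, xR]

theorem xR_mem_Jid : xR ∈ Jid := Ideal.subset_span (Set.mem_insert _ _)

theorem yR_mem_Jid : yR ∈ Jid := Ideal.subset_span (Set.mem_insert_of_mem _ rfl)

def Aring.toMvPolynomial : Aring →ₐ[ℂ] MvPolynomial (Fin 2) ℂ :=
  Ideal.Quotient.liftₐ Jid
    (Ideal.Quotient.liftₐ _ (aeval ![0, 0, X 0, X 1]) fun a ha => by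
      obtain ⟨c, rfl⟩ := Ideal.mem_span_singleton'.1 ha
      simp)
    fun a ha => by
      obtain ⟨r, s, rfl⟩ := Ideal.mem_span_pair.1 ha
      obtain ⟨r, rfl⟩ := Ideal.Quotient.mk_surjective r
      obtain ⟨s, rfl⟩ := Ideal.Quotient.mk_surjective s
      simp only [xR, yR, ← map_mul, ← map_add]
      show aeval ![0, 0, X 0, X 1] (r * X 0 + s * X 1) = 0
      simp

theorem Aring.toMvPolynomial_mk (p : Pring) :
    toMvPolynomial (Ideal.Quotient.mk _ (Ideal.Quotient.mk _ p)) = aeval ![0, 0, X 0, X 1] p :=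
  rfl

def Aring.equivMvPolynomial : Aring ≃ₐ[ℂ] MvPolynomial (Fin 2) ℂ :=
  AlgEquiv.ofAlgHom Aring.toMvPolynomial (aeval ![zA, wA])
    (by ext i; fin_cases i <;> simp [zA, wA, zR, wR, Aring.toMvPolynomial_mk])
    (by
      refine Ideal.Quotient.algHom_ext _ (Ideal.Quotient.algHom_ext _ (algHom_ext fun i => ?_))
      fin_cases i <;> simp [Aring.toMvPolynomial_mk]
      exacts [(Ideal.Quotient.eq_zero_iff_mem.2 xR_mem_Jid).symm,
        (Ideal.Quotient.eq_zero_iff_mem.2 yR_mem_Jid).symm, rfl, rfl])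

theorem Aring.dvd_of_dvd_zA_mul_of_dvd_wA_mul {g c : Aring} (hz : g ∣ zA * c)
    (hw : g ∣ wA * c) : g ∣ c := by
  have hzX : equivMvPolynomial zA = X 0 := by simp [equivMvPolynomial, zA, zR, toMvPolynomial_mk]
  have hwX : equivMvPolynomial wA = X 1 := by simp [equivMvPolynomial, wA, wR, toMvPolynomial_mk]
  rw [← map_dvd_iff equivMvPolynomial, map_mul, hzX] at hz
  rw [← map_dvd_iff equivMvPolynomial, map_mul, hwX] at hw
  exact (map_dvd_iff equivMvPolynomial).1
    (dvd_of_dvd_mul_of_dvd_mul_of_isRelPrime (isRelPrime_X_X (by decide)) hz hw)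

theorem eq_zero_of_wB_mul_eq_zero_of_zB_mul_eq_zero {f : Aring} {c : Bring f}
    (hw : wB f * c = 0) (hz : zB f * c = 0) : c = 0 := by
  obtain ⟨c, rfl⟩ := Ideal.Quotient.mk_surjective c
  simp only [wB, zB, ← map_mul, Ideal.Quotient.eq_zero_iff_mem] at hw hz ⊢
  rw [Ideal.mem_span_singleton (α := Aring)] at hw hz ⊢
  exact Aring.dvd_of_dvd_zA_mul_of_dvd_wA_mul hz hw

open LinearMap in
def conormalMap : Aring × Aring →ₗ[Aring] Jid.Cotangent :=
  (toSpanSingleton Aring _ xbar).coprod (toSpanSingleton Aring _ ybar)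

theorem conormalMap_mk (r s : Rring) :
    conormalMap (Ideal.Quotient.mk Jid r, Ideal.Quotient.mk Jid s) =
      Jid.toCotangent ⟨r * xR + s * yR,
        add_mem (Jid.mul_mem_left r xR_mem_Jid) (Jid.mul_mem_left s yR_mem_Jid)⟩ := by
  show r • xbar + s • ybar = _
  rw [xbar, ybar, ← map_smul, ← map_smul, ← map_add]
  rfl

theorem conormalMap_surjective : Function.Surjective conormalMap := by
  intro t
  obtain ⟨⟨m, hm⟩, rfl⟩ := Jid.toCotangent_surjective t
  obtain ⟨r, s, rfl⟩ := Ideal.mem_span_pair.1 hm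
  exact ⟨_, conormalMap_mk r s⟩

theorem exact_koszul_conormalMap :
    Function.Exact (LinearMap.toSpanSingleton Aring (Aring × Aring) (wA, -zA)) conormalMap := by
  rw [LinearMap.exact_iff, LinearMap.range_toSpanSingleton]
  refine le_antisymm ?_ ?_
  · rintro ⟨a, b⟩ hab
    obtain ⟨r, rfl⟩ := Ideal.Quotient.mk_surjective a
    obtain ⟨s, rfl⟩ := Ideal.Quotient.mk_surjective b
    rw [LinearMap.mem_ker, conormalMap_mk, Ideal.toCotangent_eq_zero] at hab
    obtain ⟨u, hu, v, hv, huv⟩ := Ideal.exists_eq_mul_add_mul_of_mem_span_pair_sq hab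
    obtain ⟨t, p, hr, hs⟩ := exists_eq_of_mul_xR_add_mul_yR_eq_zero
      (show (r - u) * xR + (s - v) * yR = 0 by linear_combination huv)
    refine Submodule.mem_span_singleton.2 ⟨Ideal.Quotient.mk Jid t, Prod.ext ?_ ?_⟩
    · show Ideal.Quotient.mk Jid t * Ideal.Quotient.mk Jid wR = _
      rw [← map_mul, Ideal.Quotient.eq, show t * wR - r = -(u + p * yR) by linear_combination -hr]
      exact neg_mem (add_mem hu (Jid.mul_mem_left p yR_mem_Jid))
    · show Ideal.Quotient.mk Jid t * -Ideal.Quotient.mk Jid zR = _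
      rw [← map_neg, ← map_mul, Ideal.Quotient.eq,
        show t * -zR - s = -(v - p * xR) by linear_combination -hs]
      exact neg_mem (sub_mem hv (Jid.mul_mem_left p xR_mem_Jid))
  · have hwz : ((wA, -zA) : Aring × Aring) =
        (Ideal.Quotient.mk Jid wR, Ideal.Quotient.mk Jid (-zR)) :=
      Prod.ext rfl (map_neg _ _).symm
    rw [Submodule.span_le, Set.singleton_subset_iff, SetLike.mem_coe, LinearMap.mem_ker, hwz,
      conormalMap_mk, Ideal.toCotangent_eq_zero]
    show wR * xR + -zR * yR ∈ Jid ^ 2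
    rw [show wR * xR + -zR * yR = 0 by linear_combination xR_mul_wR]
    exact zero_mem _

theorem stmt_6_general (f : Aring)
    (φB : Bring f →ₗ[Bring f] Bring f × Bring f)
    (ψB : Bring f × Bring f →ₗ[Bring f] (Bring f ⊗[Aring] Jid.Cotangent))
    (hφ : ∀ c : Bring f, φB c = (wB f * c, -(zB f * c)))
    (hψ : ∀ a b : Bring f, ψB (a, b) = a ⊗ₜ[Aring] xbar + b ⊗ₜ[Aring] ybar) :
    Function.Injective φB ∧
    LinearMap.ker ψB = LinearMap.range φB ∧
    Function.Surjective ψB := by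
  have hφ' : ⇑φB = fun c => (wA • c, (-zA) • c) := funext fun c =>
    (hφ c).trans <| Prod.ext (Algebra.smul_def wA c).symm
      ((congrArg Neg.neg (Algebra.smul_def zA c).symm).trans (neg_smul zA c).symm)
  have hψ' : ⇑ψB = fun p => p.1 ⊗ₜ[Aring] xbar + p.2 ⊗ₜ[Aring] ybar :=
    funext fun p => hψ p.1 p.2
  -- explicit arguments: letting the unifier find them through `Bring f` times out
  have hbase := @Function.Exact.lTensor_pair Aring (Bring f) Jid.Cotangent _ _ _ _ _
    wA (-zA) xbar ybar exact_koszul_conormalMap conormalMap_surjective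
  rw [← hφ', ← hψ'] at hbase
  refine ⟨(injective_iff_map_eq_zero φB).2 fun c hc => ?_, LinearMap.exact_iff.1 hbase.1,
    hbase.2⟩
  rw [hφ, Prod.mk_eq_zero, neg_eq_zero] at hc
  exact eq_zero_of_wB_mul_eq_zero_of_zB_mul_eq_zero hc.1 hc.2

theorem stmt_6 (f : Aring) (hf : f ≠ 0) (hf0 : f ∈ Ideal.span {zA, wA})
    (φB : Bring f →ₗ[Bring f] Bring f × Bring f)
    (ψB : Bring f × Bring f →ₗ[Bring f] (Bring f ⊗[Aring] Jid.Cotangent))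
    (hφ : ∀ c : Bring f, φB c = (wB f * c, -(zB f * c)))
    (hψ : ∀ a b : Bring f, ψB (a, b) = a ⊗ₜ[Aring] xbar + b ⊗ₜ[Aring] ybar) :
    Function.Injective φB ∧
    LinearMap.ker ψB = LinearMap.range φB ∧
    Function.Surjective ψB :=
  stmt_6_general f φB ψB hφ hψ
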